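/- arXiv:2001.01291 — 2 statements merged into one kernel-verified Lean document; each statement's English description precedes it below -/
import Mathlib

section
/- Continuity of the Monge–Ampère energy (Lemma 2.8): Let Ω ⊂ ℝⁿ be a bounded, open, convex domain. Suppose v_k ∈ C(cl Ω) are convex functions converging uniformly on cl Ω to a function v, and there exists a constant Λ > 0 such that Mv_k(E) ≤ Λ L^n(E) for every Borel set E ⊆ Ω and every k ≥ 0. Then lim_{k→∞} I(v_k) = I(v), where I(w) := ∫_Ω (−w) dMw. -/
/-!
Write `f_u(t) = Mu({x ∈ Ω | t < -u x})`, so that `I(u) = ∫₀^∞ f_u(t) dt`. The bound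
`Mv_k ≤ Λ Lⁿ` and an eventual bound `|v_k| ≤ M` dominate `f_{v_k}` by `Λ |Ω| 1_{(0,M]}`, so
by dominated convergence it suffices that `f_{v_k}(t) → f_v(t)` at every continuity point `t`
of the antitone function `f_v`, i.e. for almost every `t`.

Lower bound: for almost every `p` the Legendre transform of `v` (a Lipschitz function) is
differentiable at `p`, so `⟪p, ·⟫ - v` has a unique maximizer on `cl Ω`. Maximizers of
`⟪p, ·⟫ - v_k` are subgradients of `v_k` and can only accumulate at it, so for `p ∈ ∂v(O)` they
eventually lie in `O`; hence `Mv(O) ≤ liminf Mv_k(O)` for open `O`.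

Upper bound: split `{v_k < -t}` into a compact `K` at distance `≥ δ` from `∂Ω` and a collar of
width `δ`. On `K` the subgradients of the `v_k` are uniformly bounded and their limit points are
subgradients of `v`, so the reverse Fatou lemma applies; the collar has `Mv_k`-measure at most
`Λ` times its volume, which tends to `0` with `δ`.
-/

open MeasureTheory Set Filter Metric
open scoped ENNReal RealInnerProductSpace Topology

noncomputable section

/-- Euclidean space `ℝⁿ`. -/
abbrev Eucl (n : ℕ) : Type := EuclideanSpace ℝ (Fin n)

/-- Subdifferential of `u` at `x`, relative to `Ω`:
`∂u(x) = {p : u(y) ≥ u(x) + p·(y−x) for all y ∈ Ω}`. -/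
def subdiff {n : ℕ} (Ω : Set (Eucl n)) (u : Eucl n → ℝ) (x : Eucl n) : Set (Eucl n) :=
  {p | ∀ y ∈ Ω, u x + (inner ℝ p (y - x) : ℝ) ≤ u y}

/-- Image of a set `E` under the subdifferential map: `∂u(E) = ⋃_{x ∈ E} ∂u(x)`. -/
def subdiffImage {n : ℕ} (Ω : Set (Eucl n)) (u : Eucl n → ℝ) (E : Set (Eucl n)) :
    Set (Eucl n) :=
  ⋃ x ∈ E, subdiff Ω u x

/-- The Monge–Ampère measure of `u`, as a set function: `Mu(E) = L^n(∂u(E))`. -/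
def MAm {n : ℕ} (Ω : Set (Eucl n)) (u : Eucl n → ℝ) (E : Set (Eucl n)) : ℝ≥0∞ :=
  volume (subdiffImage Ω u E)

/-- The Monge–Ampère energy `I(u) = ∫_Ω (−u) dMu`, expressed via the layer-cake formula
for the (nonnegative) integrand `−u`. -/
def MAenergy {n : ℕ} (Ω : Set (Eucl n)) (u : Eucl n → ℝ) : ℝ≥0∞ :=
  ∫⁻ t in Ioi (0 : ℝ), MAm Ω u {x ∈ Ω | t < -u x}

/-- The integral `∫_Ω f dMu` of a signed integrand `f` against the Monge–Ampère measure of `u`,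
expressed via the layer-cake formula. -/
def MAint {n : ℕ} (Ω : Set (Eucl n)) (u : Eucl n → ℝ) (f : Eucl n → ℝ) : ℝ :=
  (∫⁻ t in Ioi (0 : ℝ), MAm Ω u {x ∈ Ω | t < f x}).toReal -
    (∫⁻ t in Ioi (0 : ℝ), MAm Ω u {x ∈ Ω | f x < -t}).toReal

/-- The Rayleigh quotient `R(u) = I(u) / ∫_Ω (−u)^{n+1}`. -/
def Rq {n : ℕ} (Ω : Set (Eucl n)) (u : Eucl n → ℝ) : ℝ≥0∞ :=
  MAenergy Ω u / ∫⁻ x in Ω, ENNReal.ofReal ((-u x) ^ (n + 1))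

/-- The class `K` of continuous functions on `cl Ω` that are convex, not identically zero
in `Ω`, and vanish on `∂Ω`. -/
def memK {n : ℕ} (Ω : Set (Eucl n)) (u : Eucl n → ℝ) : Prop :=
  ContinuousOn u (closure Ω) ∧ ConvexOn ℝ Ω u ∧ (∃ x ∈ Ω, u x ≠ 0) ∧
    ∀ x ∈ frontier Ω, u x = 0

/-- The Monge–Ampère eigenvalue `λ_MA = inf_{u ∈ K} R(u)`. -/
def lamMA {n : ℕ} (Ω : Set (Eucl n)) : ℝ≥0∞ :=
  ⨅ (u : Eucl n → ℝ) (_ : memK Ω u), Rq Ω u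

/-- `u` is a Monge–Ampère eigenfunction: `u ∈ K` and `Mu = λ_MA (−u)^n L^n` on `Ω`. -/
def IsMAEigenfunction {n : ℕ} (Ω : Set (Eucl n)) (u : Eucl n → ℝ) : Prop :=
  memK Ω u ∧ ∀ E ⊆ Ω, MeasurableSet E →
    MAm Ω u E = ∫⁻ x in E, lamMA Ω * ENNReal.ofReal ((-u x) ^ n)

/-- The inverse iteration scheme: `u 0` is admissible initial data, and for each `k`,
`u (k+1)` is (the unique) convex solution, continuous up to the boundary and vanishing there,
of `M u_{k+1} = R(u_k) (−u_k)^n L^n` on `Ω`. -/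
def IterScheme {n : ℕ} (Ω : Set (Eucl n)) (u : ℕ → Eucl n → ℝ) : Prop :=
  ContinuousOn (u 0) (closure Ω) ∧ ConvexOn ℝ Ω (u 0) ∧
    (∀ x ∈ frontier Ω, u 0 x ≤ 0) ∧ Rq Ω (u 0) < ⊤ ∧
    (∀ E ⊆ Ω, MeasurableSet E → volume E ≤ MAm Ω (u 0) E) ∧
    ∀ k : ℕ, ContinuousOn (u (k + 1)) (closure Ω) ∧ ConvexOn ℝ Ω (u (k + 1)) ∧
      (∀ x ∈ frontier Ω, u (k + 1) x = 0) ∧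
      ∀ E ⊆ Ω, MeasurableSet E →
        MAm Ω (u (k + 1)) E = ∫⁻ x in E, Rq Ω (u k) * ENNReal.ofReal ((-u k x) ^ n)

/-- The `L^∞(Ω)` norm (sup norm) of `u` on `Ω`. -/
def supN {n : ℕ} (Ω : Set (Eucl n)) (u : Eucl n → ℝ) : ℝ :=
  ⨆ x ∈ Ω, |u x|

/-- The `L^p(Ω)` norm of `u`. -/
def LpN {n : ℕ} (Ω : Set (Eucl n)) (p : ℝ) (u : Eucl n → ℝ) : ℝ :=
  (∫ x in Ω, |u x| ^ p) ^ (1 / p)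

/-- The determinant of the Hessian of `u` at `x`. -/
def hessDet {n : ℕ} (u : Eucl n → ℝ) (x : Eucl n) : ℝ :=
  (Matrix.of fun i j : Fin n =>
    iteratedFDeriv ℝ 2 u x ![EuclideanSpace.single i (1 : ℝ), EuclideanSpace.single j (1 : ℝ)]).det

theorem ball_subset_of_notMem_thickening_compl {α : Type*} [PseudoMetricSpace α] {s : Set α}
    {x : α} {δ : ℝ} (hx : x ∉ thickening δ sᶜ) : ball x δ ⊆ s := fun y hy =>
  by_contra fun h => hx (mem_thickening_iff.2 ⟨y, h, mem_ball'.1 hy⟩)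

section MeasureLimits

variable {α : Type*} [MeasurableSpace α] (μ : Measure α)

theorem measure_liminf_atTop_le_liminf_measure (s : ℕ → Set α) :
    μ (liminf s atTop) ≤ liminf (fun k => μ (s k)) atTop := by
  simp only [liminf_eq_iSup_iInf_of_nat, iSup_eq_iUnion, iInf_eq_iInter]
  rw [Monotone.measure_iUnion fun N N' h => biInter_subset_biInter_left fun k hk => h.trans hk]
  exact iSup_le fun N => le_iSup_of_le N <|
    le_iInf₂ fun k hk => measure_mono (biInter_subset_of_mem hk)

theorem limsup_measure_le_measure_limsup {s : ℕ → Set α} (hs : ∀ k, MeasurableSet (s k))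
    {N : ℕ} (hN : μ (⋃ k ≥ N, s k) ≠ ∞) :
    limsup (fun k => μ (s k)) atTop ≤ μ (limsup s atTop) := by
  have hanti : Antitone fun N => ⋃ k ≥ N, s k := fun N N' h =>
    biUnion_subset_biUnion_left fun k hk => h.trans hk
  simp only [limsup_eq_iInf_iSup_of_nat, iSup_eq_iUnion, iInf_eq_iInter]
  rw [hanti.measure_iInter (fun N => (MeasurableSet.biUnion (to_countable _)
    fun k _ => hs k).nullMeasurableSet) ⟨N, hN⟩]
  exact le_iInf fun N => iInf_le_of_le N <|
    iSup₂_le fun k hk => measure_mono (subset_biUnion_of_mem hk)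

theorem tendsto_measure_thickening_compl_inter [PseudoMetricSpace α] [OpensMeasurableSpace α]
    {U : Set α} (hU : IsOpen U) (hfin : μ U ≠ ∞) :
    Tendsto (fun δ => μ (thickening δ Uᶜ ∩ U)) (𝓝[>] 0) (𝓝 0) := by
  have hfin' : ∃ R > 0, μ.restrict U (thickening R Uᶜ) ≠ ∞ :=
    ⟨1, one_pos, ne_top_of_le_ne_top hfin <| by
      rw [Measure.restrict_apply isOpen_thickening.measurableSet]
      exact measure_mono inter_subset_right⟩
  simpa only [Measure.restrict_apply isOpen_thickening.measurableSet,
    Measure.restrict_apply hU.isClosed_compl.measurableSet, compl_inter_self, measure_empty]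
    using tendsto_measure_thickening_of_isClosed hfin' hU.isClosed_compl

end MeasureLimits

section UniformLimits

variable {ι α β : Type*}

theorem TendstoUniformlyOn.comp_tendsto [UniformSpace β] {F : ι → α → β} {f : α → β}
    {l : Filter ι} {s : Set α} (h : TendstoUniformlyOn F f l s) {ι' : Type*} {l' : Filter ι'}
    {φ : ι' → ι} (hφ : Tendsto φ l' l) : TendstoUniformlyOn (fun i => F (φ i)) f l' s :=
  fun u hu => hφ.eventually (h u hu)

theorem TendstoUniformlyOn.eventually_norm_le [SeminormedAddCommGroup β] {F : ι → α → β}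
    {f : α → β} {l : Filter ι} {s : Set α} (h : TendstoUniformlyOn F f l s) {B : ℝ}
    (hB : ∀ x ∈ s, ‖f x‖ ≤ B) : ∀ᶠ i in l, ∀ x ∈ s, ‖F i x‖ ≤ B + 1 := by
  filter_upwards [Metric.tendstoUniformlyOn_iff.1 h 1 one_pos] with i hi x hx
  linarith [norm_le_norm_add_const_of_dist_le (dist_comm (f x) (F i x) ▸ (hi x hx).le), hB x hx]

theorem isMaxOn_of_tendsto [TopologicalSpace β] [Preorder β] [OrderClosedTopology β]
    {l : Filter ι} [l.NeBot] {G : ι → α → β} {g : α → β} {s : Set α} {x : ι → α} {x₀ : α}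
    (hmax : ∀ᶠ i in l, IsMaxOn (G i) s (x i)) (hx : Tendsto (fun i => G i (x i)) l (𝓝 (g x₀)))
    (hG : ∀ y ∈ s, Tendsto (fun i => G i y) l (𝓝 (g y))) : IsMaxOn g s x₀ :=
  isMaxOn_iff.2 fun y hy =>
    le_of_tendsto_of_tendsto (hG y hy) hx (hmax.mono fun _ hi => isMaxOn_iff.1 hi y hy)

end UniformLimits

section Subdifferential

variable {n : ℕ} {Ω : Set (Eucl n)}

theorem mem_subdiffImage {u : Eucl n → ℝ} {E : Set (Eucl n)} {p : Eucl n} :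
    p ∈ subdiffImage Ω u E ↔ ∃ x ∈ E, p ∈ subdiff Ω u x :=
  mem_iUnion₂.trans (by simp only [exists_prop])

theorem mem_subdiff_iff_isMaxOn {u : Eucl n → ℝ} {x p : Eucl n} :
    p ∈ subdiff Ω u x ↔ IsMaxOn (fun y => ⟪p, y⟫ - u y) Ω x := by
  simp only [subdiff, isMaxOn_iff, inner_sub_right]
  exact forall₂_congr fun y _ => by constructor <;> intro h <;> linarith

theorem tendsto_inner_sub_of_tendstoUniformlyOn {ι : Type*} {l : Filter ι}
    {v : ι → Eucl n → ℝ} {w : Eucl n → ℝ} {s : Set (Eucl n)} (hunif : TendstoUniformlyOn v w l s)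
    {x₀ : Eucl n} (hw : ContinuousWithinAt w s x₀) {p : ι → Eucl n} {p₀ : Eucl n}
    (hp : Tendsto p l (𝓝 p₀)) {x : ι → Eucl n} (hx : Tendsto x l (𝓝[s] x₀)) :
    Tendsto (fun i => ⟪p i, x i⟫ - v i (x i)) l (𝓝 (⟪p₀, x₀⟫ - w x₀)) :=
  (hp.inner (tendsto_nhds_of_tendsto_nhdsWithin hx)).sub (hunif.tendsto_comp hw hx)

variable {v : ℕ → Eucl n → ℝ} {w : Eucl n → ℝ}

theorem mem_subdiffImage_of_frequently (hw : ContinuousOn w (closure Ω))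
    (hunif : TendstoUniformlyOn v w atTop (closure Ω)) {K : Set (Eucl n)} (hK : IsCompact K)
    (hKΩ : K ⊆ closure Ω) {p : ℕ → Eucl n} {p₀ : Eucl n} (hp : Tendsto p atTop (𝓝 p₀))
    (hmem : ∃ᶠ k in atTop, p k ∈ subdiffImage Ω (v k) K) : p₀ ∈ subdiffImage Ω w K := by
  obtain ⟨φ, hφ, hφmem⟩ := extraction_of_frequently_atTop hmem
  choose x hxK hx using fun j => mem_subdiffImage.1 (hφmem j)
  obtain ⟨x₀, hx₀K, ψ, hψ, hlim⟩ := hK.tendsto_subseq hxK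
  have hφψ : Tendsto (fun j => φ (ψ j)) atTop atTop := (hφ.comp hψ).tendsto_atTop
  refine mem_subdiffImage.2 ⟨x₀, hx₀K, mem_subdiff_iff_isMaxOn.2 <|
    isMaxOn_of_tendsto (Eventually.of_forall fun j => mem_subdiff_iff_isMaxOn.1 (hx (ψ j)))
      (tendsto_inner_sub_of_tendstoUniformlyOn (hunif.comp_tendsto hφψ) (hw x₀ (hKΩ hx₀K))
        (hp.comp hφψ) (tendsto_nhdsWithin_iff.2 ⟨hlim, .of_forall fun j => hKΩ (hxK (ψ j))⟩))
      fun y hy => ((hp.comp hφψ).inner tendsto_const_nhds).sub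
        ((hunif.comp_tendsto hφψ).tendsto_at (subset_closure hy))⟩

theorem isClosed_subdiffImage {u : Eucl n → ℝ} (hu : ContinuousOn u (closure Ω))
    {K : Set (Eucl n)} (hK : IsCompact K) (hKΩ : K ⊆ closure Ω) :
    IsClosed (subdiffImage Ω u K) :=
  IsSeqClosed.isClosed fun _ _ hp hlim =>
    mem_subdiffImage_of_frequently (v := fun _ => u) hu
      (fun _ hU => .of_forall fun _ _ _ => refl_mem_uniformity hU) hK hKΩ hlim (.of_forall hp)

theorem limsup_subdiffImage_subset (hw : ContinuousOn w (closure Ω))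
    (hunif : TendstoUniformlyOn v w atTop (closure Ω)) {K : Set (Eucl n)} (hK : IsCompact K)
    (hKΩ : K ⊆ closure Ω) :
    limsup (fun k => subdiffImage Ω (v k) K) atTop ⊆ subdiffImage Ω w K := fun _ hp =>
  mem_subdiffImage_of_frequently hw hunif hK hKΩ tendsto_const_nhds
    (mem_limsup_iff_frequently_mem.1 hp)

theorem mul_norm_le_of_mem_subdiff {u : Eucl n → ℝ} {x p : Eucl n} {δ M : ℝ} (hδ : 0 < δ)
    (hball : ball x δ ⊆ Ω) (hM : ∀ y ∈ Ω, |u y| ≤ M) (hp : p ∈ subdiff Ω u x) :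
    δ * ‖p‖ ≤ 4 * M := by
  have hx := abs_le.1 (hM x (hball (mem_ball_self hδ)))
  rcases eq_or_ne p 0 with rfl | hp0
  · simp only [norm_zero, mul_zero]; linarith
  have hpos : 0 < ‖p‖ := norm_pos_iff.2 hp0
  set y := x + (δ / 2 / ‖p‖) • p
  have hy : y ∈ Ω := hball <| by
    rw [mem_ball, dist_eq_norm, add_sub_cancel_left, norm_smul, Real.norm_eq_abs,
      abs_of_pos (by positivity), div_mul_cancel₀ _ hpos.ne']
    linarith
  have hinner : ⟪p, y - x⟫ = δ / 2 * ‖p‖ := by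
    rw [add_sub_cancel_left, real_inner_smul_right, real_inner_self_eq_norm_sq]
    field_simp
  have hy' := abs_le.1 (hM y hy)
  have := hp y hy
  linarith

theorem subdiffImage_subset_closedBall {u : Eucl n → ℝ} {K : Set (Eucl n)} {δ M : ℝ}
    (hδ : 0 < δ) (hK : ∀ x ∈ K, ball x δ ⊆ Ω) (hM : ∀ y ∈ Ω, |u y| ≤ M) :
    subdiffImage Ω u K ⊆ closedBall 0 (4 * M / δ) := fun p hp => by
  obtain ⟨x, hx, hpx⟩ := mem_subdiffImage.1 hp
  rw [mem_closedBall_zero_iff, le_div_iff₀ hδ, mul_comm]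
  exact mul_norm_le_of_mem_subdiff hδ (hK x hx) hM hpx

end Subdifferential

section Legendre

variable {n : ℕ} {Ω : Set (Eucl n)} {w : Eucl n → ℝ}

def legendre (Ω : Set (Eucl n)) (w : Eucl n → ℝ) (p : Eucl n) : ℝ :=
  sSup ((fun x => ⟪p, x⟫ - w x) '' closure Ω)

theorem le_legendre (hΩb : Bornology.IsBounded Ω) (hw : ContinuousOn w (closure Ω))
    (p : Eucl n) {x : Eucl n} (hx : x ∈ closure Ω) : ⟪p, x⟫ - w x ≤ legendre Ω w p :=
  le_csSup (hΩb.isCompact_closure.bddAbove_image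
    ((continuous_const.inner continuous_id).continuousOn.sub hw)) (mem_image_of_mem _ hx)

theorem legendre_eq_of_isMaxOn {p x : Eucl n} (hx : x ∈ closure Ω)
    (h : IsMaxOn (fun y => ⟪p, y⟫ - w y) (closure Ω) x) : legendre Ω w p = ⟪p, x⟫ - w x :=
  IsGreatest.csSup_eq ⟨mem_image_of_mem _ hx, forall_mem_image.2 fun _ hy => h hy⟩

theorem lipschitzWith_legendre (hΩb : Bornology.IsBounded Ω) (hΩne : Ω.Nonempty)
    (hw : ContinuousOn w (closure Ω)) : ∃ C, LipschitzWith C (legendre Ω w) := by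
  obtain ⟨R, hR0, hR⟩ := hΩb.closure.subset_closedBall_lt 0 0
  refine ⟨⟨R, hR0.le⟩, LipschitzWith.of_le_add_mul _ fun p q =>
    csSup_le (hΩne.closure.image _) ?_⟩
  rintro _ ⟨x, hx, rfl⟩
  have hxR : ‖x‖ ≤ R := mem_closedBall_zero_iff.1 (hR hx)
  have hpq : ⟪p - q, x⟫ ≤ R * dist p q := by
    rw [dist_eq_norm, mul_comm]
    exact (real_inner_le_norm _ _).trans (mul_le_mul_of_nonneg_left hxR (norm_nonneg _))
  have := le_legendre hΩb hw q hx
  rw [inner_sub_left] at hpq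
  show ⟪p, x⟫ - w x ≤ legendre Ω w q + R * dist p q
  linarith

theorem ae_differentiableAt_legendre (hΩb : Bornology.IsBounded Ω) (hΩne : Ω.Nonempty)
    (hw : ContinuousOn w (closure Ω)) : ∀ᵐ p, DifferentiableAt ℝ (legendre Ω w) p :=
  (lipschitzWith_legendre hΩb hΩne hw).choose_spec.ae_differentiableAt

theorem fderiv_legendre_eq_innerSL (hΩb : Bornology.IsBounded Ω)
    (hw : ContinuousOn w (closure Ω)) {p x : Eucl n}
    (hd : DifferentiableAt ℝ (legendre Ω w) p) (hx : x ∈ closure Ω)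
    (h : IsMaxOn (fun y => ⟪p, y⟫ - w y) (closure Ω) x) :
    fderiv ℝ (legendre Ω w) p = innerSL ℝ x := by
  have hmin : IsLocalMin (fun q => legendre Ω w q - ⟪q, x⟫) p := by
    refine IsMinOn.isLocalMin (s := univ) (isMinOn_iff.2 fun q _ => ?_) univ_mem
    have := le_legendre hΩb hw q hx
    rw [legendre_eq_of_isMaxOn hx h]
    linarith
  have hinner : HasFDerivAt (fun q => ⟪q, x⟫) (innerSL ℝ x) p := by
    convert (innerSL ℝ x).hasFDerivAt using 1
    ext q
    simp [real_inner_comm]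
  exact sub_eq_zero.1 (hmin.hasFDerivAt_eq_zero (hd.hasFDerivAt.sub hinner))

theorem eq_of_isMaxOn_of_differentiableAt_legendre (hΩb : Bornology.IsBounded Ω)
    (hw : ContinuousOn w (closure Ω)) {p x₁ x₂ : Eucl n}
    (hd : DifferentiableAt ℝ (legendre Ω w) p)
    (hx₁ : x₁ ∈ closure Ω) (h₁ : IsMaxOn (fun y => ⟪p, y⟫ - w y) (closure Ω) x₁)
    (hx₂ : x₂ ∈ closure Ω) (h₂ : IsMaxOn (fun y => ⟪p, y⟫ - w y) (closure Ω) x₂) : x₁ = x₂ := by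
  have h := (fderiv_legendre_eq_innerSL hΩb hw hd hx₁ h₁).symm.trans
    (fderiv_legendre_eq_innerSL hΩb hw hd hx₂ h₂)
  exact ext_inner_right ℝ fun y => by simpa using DFunLike.congr_fun h y

variable {v : ℕ → Eucl n → ℝ}

theorem eventually_mem_subdiffImage_of_differentiableAt (hΩb : Bornology.IsBounded Ω)
    (hcont : ∀ k, ContinuousOn (v k) (closure Ω)) (hw : ContinuousOn w (closure Ω))
    (hunif : TendstoUniformlyOn v w atTop (closure Ω)) {O : Set (Eucl n)} (hO : IsOpen O)
    (hOΩ : O ⊆ Ω) {p : Eucl n} (hd : DifferentiableAt ℝ (legendre Ω w) p)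
    (hp : p ∈ subdiffImage Ω w O) : ∀ᶠ k in atTop, p ∈ subdiffImage Ω (v k) O := by
  obtain ⟨x, hxO, hpx⟩ := mem_subdiffImage.1 hp
  have hΩc := hΩb.isCompact_closure
  have hlin : ContinuousOn (fun y => ⟪p, y⟫) (closure Ω) :=
    (continuous_const.inner continuous_id).continuousOn
  have hmax : IsMaxOn (fun y => ⟪p, y⟫ - w y) (closure Ω) x :=
    (mem_subdiff_iff_isMaxOn.1 hpx).closure (hlin.sub hw)
  choose xk hxk hmaxk using fun k =>
    hΩc.exists_isMaxOn ⟨x, subset_closure (hOΩ hxO)⟩ (hlin.sub (hcont k))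
  suffices ∀ᶠ k in atTop, xk k ∈ O from this.mono fun k hk =>
    mem_subdiffImage.2 ⟨xk k, hk, mem_subdiff_iff_isMaxOn.2 ((hmaxk k).on_subset subset_closure)⟩
  by_contra hcon
  obtain ⟨φ, hφ, hφmem⟩ := extraction_of_frequently_atTop
    ((not_eventually.1 hcon).mono fun k hk => ⟨hxk k, hk⟩ : ∃ᶠ k in atTop, xk k ∈ closure Ω \ O)
  obtain ⟨x₀, hx₀, ψ, hψ, hlim⟩ := (hΩc.diff hO).tendsto_subseq hφmem
  have hφψ : Tendsto (fun j => φ (ψ j)) atTop atTop := (hφ.comp hψ).tendsto_atTop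
  have hmax₀ : IsMaxOn (fun y => ⟪p, y⟫ - w y) (closure Ω) x₀ :=
    isMaxOn_of_tendsto (Eventually.of_forall fun j => hmaxk (φ (ψ j)))
      (tendsto_inner_sub_of_tendstoUniformlyOn (hunif.comp_tendsto hφψ) (hw x₀ hx₀.1)
        tendsto_const_nhds (tendsto_nhdsWithin_iff.2 ⟨hlim, .of_forall fun j => (hφmem (ψ j)).1⟩))
      fun y hy => tendsto_const_nhds.sub ((hunif.comp_tendsto hφψ).tendsto_at hy)
  exact hx₀.2 (eq_of_isMaxOn_of_differentiableAt_legendre hΩb hw hd hx₀.1 hmax₀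
    (subset_closure (hOΩ hxO)) hmax ▸ hxO)

end Legendre

section MongeAmpere

variable {n : ℕ} {Ω : Set (Eucl n)}

def negSuperlevel (Ω : Set (Eucl n)) (u : Eucl n → ℝ) (t : ℝ) : Set (Eucl n) :=
  {x ∈ Ω | t < -u x}

theorem MAenergy_eq_lintegral (u : Eucl n → ℝ) :
    MAenergy Ω u = ∫⁻ t in Ioi 0, MAm Ω u (negSuperlevel Ω u t) :=
  rfl

theorem negSuperlevel_antitone (u : Eucl n → ℝ) : Antitone (negSuperlevel Ω u) :=
  fun _ _ h _ hx => ⟨hx.1, h.trans_lt hx.2⟩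

theorem isOpen_negSuperlevel (hΩo : IsOpen Ω) {u : Eucl n → ℝ} (hu : ContinuousOn u Ω) (t : ℝ) :
    IsOpen (negSuperlevel Ω u t) :=
  hu.neg.isOpen_inter_preimage hΩo isOpen_Ioi

theorem eventually_negSuperlevel_subset {ι : Type*} {l : Filter ι} {v : ι → Eucl n → ℝ}
    {w : Eucl n → ℝ} (hunif : TendstoUniformlyOn v w l Ω) {ε : ℝ} (hε : 0 < ε) (t : ℝ) :
    ∀ᶠ k in l, negSuperlevel Ω w (t + ε) ⊆ negSuperlevel Ω (v k) t ∧
      negSuperlevel Ω (v k) (t + ε) ⊆ negSuperlevel Ω w t := by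
  filter_upwards [Metric.tendstoUniformlyOn_iff.1 hunif ε hε] with k hk
  have h := fun x hx => abs_lt.1 (Real.dist_eq (w x) (v k x) ▸ hk x hx)
  exact ⟨fun x hx => ⟨hx.1, by linarith [h x hx.1, hx.2]⟩,
    fun x hx => ⟨hx.1, by linarith [h x hx.1, hx.2]⟩⟩

theorem MAm_mono {u : Eucl n → ℝ} {E F : Set (Eucl n)} (h : E ⊆ F) : MAm Ω u E ≤ MAm Ω u F :=
  measure_mono (biUnion_subset_biUnion_left h)

theorem MAm_union_le (u : Eucl n → ℝ) (E F : Set (Eucl n)) :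
    MAm Ω u (E ∪ F) ≤ MAm Ω u E + MAm Ω u F := by
  simp only [MAm, subdiffImage, biUnion_union]
  exact measure_union_le _ _

theorem MAm_iUnion_of_monotone (u : Eucl n → ℝ) {E : ℕ → Set (Eucl n)} (hE : Monotone E) :
    MAm Ω u (⋃ m, E m) = ⨆ m, MAm Ω u (E m) := by
  simp only [MAm, subdiffImage, biUnion_iUnion]
  exact Monotone.measure_iUnion fun _ _ h => biUnion_subset_biUnion_left (hE h)

theorem antitone_MAm_negSuperlevel (u : Eucl n → ℝ) :
    Antitone fun t => MAm Ω u (negSuperlevel Ω u t) :=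
  fun _ _ h => MAm_mono (negSuperlevel_antitone u h)

theorem MAm_negSuperlevel_le_indicator (hΩo : IsOpen Ω) {u : Eucl n → ℝ}
    (hu : ContinuousOn u Ω) {Λ : ℝ}
    (hdom : ∀ E ⊆ Ω, MeasurableSet E → MAm Ω u E ≤ ENNReal.ofReal Λ * volume E) {M : ℝ}
    (hM : ∀ x ∈ Ω, |u x| ≤ M) {t : ℝ} (ht : 0 < t) :
    MAm Ω u (negSuperlevel Ω u t) ≤
      (Ioc 0 M).indicator (fun _ => ENNReal.ofReal Λ * volume Ω) t := by
  by_cases htM : t ≤ M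
  · rw [indicator_of_mem (show t ∈ Ioc 0 M from ⟨ht, htM⟩)]
    refine (hdom _ (fun x hx => hx.1) (isOpen_negSuperlevel hΩo hu t).measurableSet).trans ?_
    gcongr
    exact fun x hx => hx.1
  · have : negSuperlevel Ω u t = ∅ := eq_empty_of_forall_notMem fun x hx =>
      htM (hx.2.le.trans ((neg_le_abs _).trans (hM x hx.1)))
    simp [this, MAm, subdiffImage]

variable {v : ℕ → Eucl n → ℝ} {w : Eucl n → ℝ}

theorem MAm_le_liminf_of_isOpen (hΩb : Bornology.IsBounded Ω)
    (hcont : ∀ k, ContinuousOn (v k) (closure Ω)) (hw : ContinuousOn w (closure Ω))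
    (hunif : TendstoUniformlyOn v w atTop (closure Ω)) {O : Set (Eucl n)} (hO : IsOpen O)
    (hOΩ : O ⊆ Ω) : MAm Ω w O ≤ liminf (fun k => MAm Ω (v k) O) atTop := by
  rcases O.eq_empty_or_nonempty with rfl | ⟨x, hx⟩
  · simp [MAm, subdiffImage]
  calc MAm Ω w O ≤ volume (liminf (fun k => subdiffImage Ω (v k) O) atTop) := by
        refine measure_mono_ae ?_
        filter_upwards [ae_differentiableAt_legendre hΩb (nonempty_of_mem (hOΩ hx)) hw]
          with p hd hp
        exact mem_liminf_iff_eventually_mem.2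
          (eventually_mem_subdiffImage_of_differentiableAt hΩb hcont hw hunif hO hOΩ hd hp)
    _ ≤ _ := measure_liminf_atTop_le_liminf_measure _ _

theorem MAm_negSuperlevel_le_liminf (hΩo : IsOpen Ω) (hΩb : Bornology.IsBounded Ω)
    (hcont : ∀ k, ContinuousOn (v k) (closure Ω)) (hw : ContinuousOn w (closure Ω))
    (hunif : TendstoUniformlyOn v w atTop (closure Ω)) (t : ℝ) :
    MAm Ω w (negSuperlevel Ω w t) ≤
      liminf (fun k => MAm Ω (v k) (negSuperlevel Ω (v k) t)) atTop := by
  have hunion : negSuperlevel Ω w t = ⋃ m : ℕ, negSuperlevel Ω w (t + 1 / (m + 1)) := by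
    refine (iUnion_subset fun m => negSuperlevel_antitone w (by simp; positivity)).antisymm' ?_
    intro x hx
    obtain ⟨m, hm⟩ := exists_nat_one_div_lt (sub_pos.2 hx.2)
    exact mem_iUnion.2 ⟨m, hx.1, by linarith⟩
  have hmono : Monotone fun m : ℕ => negSuperlevel Ω w (t + 1 / (m + 1)) := fun m m' h =>
    negSuperlevel_antitone w ((add_le_add_iff_left t).2 (Nat.one_div_le_one_div h))
  rw [hunion, MAm_iUnion_of_monotone w hmono]
  refine iSup_le fun m => (MAm_le_liminf_of_isOpen hΩb hcont hw hunif
    (isOpen_negSuperlevel hΩo (hw.mono subset_closure) _) fun x hx => hx.1).trans ?_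
  refine liminf_le_liminf ?_
  filter_upwards [eventually_negSuperlevel_subset (hunif.mono subset_closure)
    Nat.one_div_pos_of_nat t] with k hk
  exact MAm_mono hk.1

theorem isCompact_superlevel_diff_thickening (hΩb : Bornology.IsBounded Ω)
    (hw : ContinuousOn w (closure Ω)) (r δ : ℝ) :
    IsCompact ({x ∈ closure Ω | r ≤ -w x} \ thickening δ Ωᶜ) :=
  hΩb.isCompact_closure.of_isClosed_subset
    ((hw.neg.preimage_isClosed_of_isClosed isClosed_closure isClosed_Ici).sdiff isOpen_thickening)
    fun _ hx => hx.1.1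

theorem limsup_MAm_le_of_isCompact (hcont : ∀ k, ContinuousOn (v k) (closure Ω))
    (hw : ContinuousOn w (closure Ω)) (hunif : TendstoUniformlyOn v w atTop (closure Ω))
    {K : Set (Eucl n)} (hK : IsCompact K) (hKΩ : K ⊆ closure Ω) {R : ℝ}
    (hR : ∀ᶠ k in atTop, subdiffImage Ω (v k) K ⊆ closedBall 0 R) :
    limsup (fun k => MAm Ω (v k) K) atTop ≤ MAm Ω w K := by
  obtain ⟨N, hN⟩ := eventually_atTop.1 hR
  refine (limsup_measure_le_measure_limsup volume
    (fun k => (isClosed_subdiffImage (hcont k) hK hKΩ).measurableSet) (N := N) ?_).trans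
    (measure_mono (limsup_subdiffImage_subset hw hunif hK hKΩ))
  exact ne_top_of_le_ne_top measure_closedBall_lt_top.ne
    (measure_mono (iUnion₂_subset fun k hk => hN k hk))

theorem limsup_MAm_negSuperlevel_le (hΩo : IsOpen Ω) (hΩb : Bornology.IsBounded Ω)
    (hcont : ∀ k, ContinuousOn (v k) (closure Ω)) (hw : ContinuousOn w (closure Ω))
    (hunif : TendstoUniformlyOn v w atTop (closure Ω)) {Λ : ℝ}
    (hdom : ∀ k, ∀ E ⊆ Ω, MeasurableSet E → MAm Ω (v k) E ≤ ENNReal.ofReal Λ * volume E)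
    {M : ℝ} (hM : ∀ᶠ k in atTop, ∀ x ∈ Ω, |v k x| ≤ M) {s t : ℝ} (hst : s < t) {δ : ℝ}
    (hδ : 0 < δ) :
    limsup (fun k => MAm Ω (v k) (negSuperlevel Ω (v k) t)) atTop ≤
      MAm Ω w (negSuperlevel Ω w s) + ENNReal.ofReal Λ * volume (thickening δ Ωᶜ ∩ Ω) := by
  obtain ⟨r, hsr, hrt⟩ := exists_between hst
  set K := {x ∈ closure Ω | r ≤ -w x} \ thickening δ Ωᶜ
  have hball : ∀ x ∈ K, ball x δ ⊆ Ω := fun _ hx => ball_subset_of_notMem_thickening_compl hx.2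
  have hKΩ : K ⊆ Ω := fun x hx => hball x hx (mem_ball_self hδ)
  have hsplit : ∀ᶠ k in atTop, MAm Ω (v k) (negSuperlevel Ω (v k) t) ≤
      MAm Ω (v k) K + ENNReal.ofReal Λ * volume (thickening δ Ωᶜ ∩ Ω) := by
    filter_upwards [eventually_negSuperlevel_subset (hunif.mono subset_closure)
      (sub_pos.2 hrt) r] with k hk
    have hcover : negSuperlevel Ω (v k) t ⊆ K ∪ (thickening δ Ωᶜ ∩ Ω) := fun x hx => by
      by_cases hxδ : x ∈ thickening δ Ωᶜ
      · exact Or.inr ⟨hxδ, hx.1⟩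
      · have := hk.2 (by rwa [add_sub_cancel] : x ∈ negSuperlevel Ω (v k) (r + (t - r)))
        exact Or.inl ⟨⟨subset_closure hx.1, this.2.le⟩, hxδ⟩
    calc _ ≤ MAm Ω (v k) (K ∪ (thickening δ Ωᶜ ∩ Ω)) := MAm_mono hcover
      _ ≤ MAm Ω (v k) K + MAm Ω (v k) (thickening δ Ωᶜ ∩ Ω) := MAm_union_le _ _ _
      _ ≤ _ := add_le_add le_rfl
          (hdom k _ inter_subset_right (isOpen_thickening.inter hΩo).measurableSet)
  have hKs : K ⊆ negSuperlevel Ω w s := fun x hx => ⟨hKΩ hx, hsr.trans_le hx.1.2⟩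
  calc _ ≤ limsup (fun k => MAm Ω (v k) K + ENNReal.ofReal Λ * volume (thickening δ Ωᶜ ∩ Ω))
        atTop := limsup_le_limsup hsplit
    _ = limsup (fun k => MAm Ω (v k) K) atTop +
        ENNReal.ofReal Λ * volume (thickening δ Ωᶜ ∩ Ω) :=
      limsup_add_const _ _ _ (by isBoundedDefault) (by isBoundedDefault)
    _ ≤ _ := by
      gcongr
      exact (limsup_MAm_le_of_isCompact hcont hw hunif
        (isCompact_superlevel_diff_thickening hΩb hw r δ) (hKΩ.trans subset_closure)
        (hM.mono fun k hk => subdiffImage_subset_closedBall hδ hball hk)).trans (MAm_mono hKs)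

theorem tendsto_MAm_negSuperlevel (hΩo : IsOpen Ω) (hΩb : Bornology.IsBounded Ω)
    (hcont : ∀ k, ContinuousOn (v k) (closure Ω)) (hw : ContinuousOn w (closure Ω))
    (hunif : TendstoUniformlyOn v w atTop (closure Ω)) {Λ : ℝ}
    (hdom : ∀ k, ∀ E ⊆ Ω, MeasurableSet E → MAm Ω (v k) E ≤ ENNReal.ofReal Λ * volume E)
    {M : ℝ} (hM : ∀ᶠ k in atTop, ∀ x ∈ Ω, |v k x| ≤ M) {t : ℝ}
    (ht : ContinuousAt (fun s => MAm Ω w (negSuperlevel Ω w s)) t) :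
    Tendsto (fun k => MAm Ω (v k) (negSuperlevel Ω (v k) t)) atTop
      (𝓝 (MAm Ω w (negSuperlevel Ω w t))) := by
  refine tendsto_of_le_liminf_of_limsup_le
    (MAm_negSuperlevel_le_liminf hΩo hΩb hcont hw hunif t) ?_
  have hcollar := tendsto_measure_thickening_compl_inter volume hΩo hΩb.measure_lt_top.ne
  have hlt : ∀ s < t, limsup (fun k => MAm Ω (v k) (negSuperlevel Ω (v k) t)) atTop ≤
      MAm Ω w (negSuperlevel Ω w s) := by
    intro s hst
    have hlim := (tendsto_const_nhds (x := MAm Ω w (negSuperlevel Ω w s))).add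
      (ENNReal.Tendsto.const_mul (a := ENNReal.ofReal Λ) hcollar (Or.inr ENNReal.ofReal_ne_top))
    rw [mul_zero, add_zero] at hlim
    exact ge_of_tendsto hlim (eventually_nhdsWithin_of_forall fun δ hδ =>
      limsup_MAm_negSuperlevel_le hΩo hΩb hcont hw hunif hdom hM hst hδ)
  exact ge_of_tendsto (ht.tendsto.mono_left nhdsWithin_le_nhds : Tendsto _ (𝓝[<] t) _)
    (eventually_nhdsWithin_of_forall hlt)

end MongeAmpere

theorem continuity_of_energy_general {n : ℕ}
    (Ω : Set (Eucl n)) (hΩo : IsOpen Ω)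
    (hΩb : Bornology.IsBounded Ω)
    (v : ℕ → Eucl n → ℝ) (vlim : Eucl n → ℝ)
    (hcont : ∀ k : ℕ, ContinuousOn (v k) (closure Ω))
    (hunif : TendstoUniformlyOn v vlim atTop (closure Ω))
    (Λ : ℝ)
    (hdom : ∀ k : ℕ, ∀ E ⊆ Ω, MeasurableSet E →
      MAm Ω (v k) E ≤ ENNReal.ofReal Λ * volume E) :
    Tendsto (fun k => MAenergy Ω (v k)) atTop (𝓝 (MAenergy Ω vlim)) := by
  have hw : ContinuousOn vlim (closure Ω) := hunif.continuousOn (.of_forall hcont)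
  obtain ⟨B, hB⟩ := hΩb.isCompact_closure.exists_bound_of_continuousOn hw
  have hM : ∀ᶠ k in atTop, ∀ x ∈ Ω, |v k x| ≤ B + 1 :=
    (hunif.eventually_norm_le hB).mono fun k hk x hx => hk x (subset_closure hx)
  simp only [MAenergy_eq_lintegral]
  refine tendsto_lintegral_filter_of_dominated_convergence
    ((Ioc 0 (B + 1)).indicator fun _ => ENNReal.ofReal Λ * volume Ω)
    (.of_forall fun k => (antitone_MAm_negSuperlevel (v k)).measurable) ?_ ?_ ?_
  · filter_upwards [hM] with k hk
    filter_upwards [ae_restrict_mem measurableSet_Ioi] with t ht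
    exact MAm_negSuperlevel_le_indicator hΩo ((hcont k).mono subset_closure) (hdom k) hk ht
  · rw [lintegral_indicator_const measurableSet_Ioc]
    exact ENNReal.mul_ne_top (ENNReal.mul_ne_top ENNReal.ofReal_ne_top hΩb.measure_lt_top.ne)
      (ne_top_of_le_ne_top measure_Ioc_lt_top.ne (Measure.restrict_apply_le _ _))
  · filter_upwards [ae_restrict_of_ae (measure_eq_zero_iff_ae_notMem.1
      ((antitone_MAm_negSuperlevel vlim).countable_not_continuousAt.measure_zero volume))]
      with t ht
    exact tendsto_MAm_negSuperlevel hΩo hΩb hcont hw hunif hdom hM (not_not.1 ht)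

/-- Lemma 2.8: continuity of the Monge–Ampère energy along a uniformly
convergent sequence with uniformly dominated Monge–Ampère measures. -/
theorem continuity_of_energy {n : ℕ} (hn : 1 ≤ n)
    (Ω : Set (Eucl n)) (hΩo : IsOpen Ω) (hΩc : Convex ℝ Ω)
    (hΩb : Bornology.IsBounded Ω) (hΩne : Ω.Nonempty)
    (v : ℕ → Eucl n → ℝ) (vlim : Eucl n → ℝ)
    (hcont : ∀ k : ℕ, ContinuousOn (v k) (closure Ω))
    (hconv : ∀ k : ℕ, ConvexOn ℝ Ω (v k))
    (hunif : TendstoUniformlyOn v vlim atTop (closure Ω))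
    (Λ : ℝ) (hΛ : 0 < Λ)
    (hdom : ∀ k : ℕ, ∀ E ⊆ Ω, MeasurableSet E →
      MAm Ω (v k) E ≤ ENNReal.ofReal Λ * volume E) :
    Tendsto (fun k => MAenergy Ω (v k)) atTop (𝓝 (MAenergy Ω vlim)) :=
  continuity_of_energy_general Ω hΩo hΩb v vlim hcont hunif Λ hdom
end
end

section
/- Equivalence of L^p norms for convex functions vanishing on the boundary (Lemma 2.9): Let Ω ⊂ ℝⁿ be a bounded, open, convex domain and let u ∈ C(cl Ω) be convex with u = 0 on ∂Ω. Then for every p ≥ 1, ‖u‖_{L^∞(Ω)} / (n+1) ≤ ( (1/L^n(Ω)) ∫_Ω |u|^p )^{1/p} ≤ ‖u‖_{L^∞(Ω)}. -/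
open MeasureTheory Set Filter Metric
open scoped ENNReal RealInnerProductSpace Topology

noncomputable section

/-!
A convex function that is continuous up to the boundary attains its maximum over the compact
convex set `cl Ω` at an extreme point, which lies on `∂Ω`; hence `u ≤ 0` and `|u| = -u`.
Fix `x₀ ∈ Ω`. By convexity along segments from `x₀`, the image of `Ω` under the homothety of
centre `x₀` and ratio `1 - t / |u x₀|` lies in `{|u| ≥ t}`, so by the layer-cake formula
`∫_Ω |u| ≥ L^n(Ω) ∫_0^{|u x₀|} (1 - t / |u x₀|)^n dt = |u x₀| L^n(Ω) / (n + 1)`.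
Jensen's inequality for `t ↦ t^p` passes from the mean of `|u|` to the `L^p` mean. The upper
bound is the trivial estimate `|u| ≤ ‖u‖_∞`.
-/

section MaximumPrinciple

variable {E : Type*} [AddCommGroup E] [Module ℝ E] [TopologicalSpace E]
  [IsTopologicalAddGroup E] [ContinuousSMul ℝ E] {s : Set E} {f : E → ℝ}

theorem ConvexOn.closure_of_continuousOn (hf : ConvexOn ℝ s f)
    (hcont : ContinuousOn f (closure s)) : ConvexOn ℝ (closure s) f := by
  refine ⟨hf.1.closure, fun x hx y hy a b ha hb hab => ?_⟩
  have hxy : (x, y) ∈ closure (s ×ˢ s) := by rw [closure_prod_eq]; exact ⟨hx, hy⟩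
  have hfst : MapsTo Prod.fst (s ×ˢ s) (closure s) := fun p hp => subset_closure hp.1
  have hsnd : MapsTo Prod.snd (s ×ˢ s) (closure s) := fun p hp => subset_closure hp.2
  have hcomb : MapsTo (fun p : E × E => a • p.1 + b • p.2) (s ×ˢ s) (closure s) :=
    fun p hp => subset_closure (hf.1 hp.1 hp.2 ha hb hab)
  refine ContinuousWithinAt.closure_le (f := fun p : E × E => f (a • p.1 + b • p.2))
    (g := fun p => a * f p.1 + b * f p.2) hxy ?_ ?_ fun p hp => hf.2 hp.1 hp.2 ha hb hab
  · exact ContinuousWithinAt.comp (x := (x, y)) (hcont _ (hf.1.closure hx hy ha hb hab))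
      (by fun_prop : Continuous fun p : E × E => a • p.1 + b • p.2).continuousWithinAt hcomb
  · exact (((hcont x hx).comp continuousWithinAt_fst hfst).const_mul a).add
      (((hcont y hy).comp continuousWithinAt_snd hsnd).const_mul b)

variable [LocallyConvexSpace ℝ E] [T2Space E] [Nontrivial E]

theorem ConvexOn.le_of_forall_frontier_le (hs : IsCompact (closure s)) (hf : ConvexOn ℝ s f)
    (hcont : ContinuousOn f (closure s)) {c : ℝ} (hc : ∀ x ∈ frontier s, f x ≤ c) :
    ∀ x ∈ closure s, f x ≤ c := by
  have hconv : Convex ℝ (closure s) := hf.1.closure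
  have hext : (closure s).extremePoints ℝ ⊆ frontier s := fun e he =>
    ⟨extremePoints_subset he, fun hint => (disjoint_interior_extremePoints (closure s)).ne_of_mem
      (interior_mono subset_closure hint) he rfl⟩
  have hhull : ∀ y ∈ convexHull ℝ ((closure s).extremePoints ℝ), f y ≤ c := fun y hy => by
    obtain ⟨e, he, hle⟩ :=
      (hf.closure_of_continuousOn hcont).exists_ge_of_mem_convexHull extremePoints_subset hy
    exact hle.trans (hc e (hext he))
  intro x hx
  have hx' : x ∈ closure (convexHull ℝ ((closure s).extremePoints ℝ)) := by
    rwa [closure_convexHull_extremePoints hs hconv]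
  exact ContinuousWithinAt.closure_le hx'
    ((hcont x hx).mono (convexHull_min extremePoints_subset hconv)) continuousWithinAt_const hhull

end MaximumPrinciple

theorem lintegral_Ioo_one_sub_div_pow {m : ℝ} (hm : 0 < m) (d : ℕ) :
    ∫⁻ t in Ioo 0 m, ENNReal.ofReal ((1 - t / m) ^ d) = ENNReal.ofReal (m / (d + 1)) := by
  have hint : IntegrableOn (fun t : ℝ => (1 - t / m) ^ d) (Ioo 0 m) :=
    (by fun_prop : Continuous fun t : ℝ => (1 - t / m) ^ d).integrableOn_Icc.mono_set
      Ioo_subset_Icc_self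
  have hnn : 0 ≤ᵐ[volume.restrict (Ioo 0 m)] fun t : ℝ => (1 - t / m) ^ d :=
    (ae_restrict_iff' measurableSet_Ioo).mpr (ae_of_all _ fun t ht => by
      have : t / m ≤ 1 := (div_le_one hm).mpr ht.2.le
      positivity)
  rw [← ofReal_integral_eq_lintegral_ofReal hint hnn, ← integral_Ioc_eq_integral_Ioo,
    ← intervalIntegral.integral_of_le hm.le,
    intervalIntegral.integral_comp_div (fun t => (1 - t) ^ d) hm.ne',
    intervalIntegral.integral_comp_sub_left (fun t => t ^ d)]
  simp [div_self hm.ne', integral_pow, div_eq_mul_inv]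

section Cone

variable {E : Type*} [NormedAddCommGroup E] [NormedSpace ℝ E] {s : Set E} {u : E → ℝ} {x₀ : E}

theorem ConvexOn.image_homothety_subset_of_nonpos (hu : ConvexOn ℝ s u)
    (hu0 : ∀ x ∈ s, u x ≤ 0) (hx₀ : x₀ ∈ s) {r : ℝ} (hr0 : 0 ≤ r) (hr1 : r ≤ 1) :
    AffineMap.homothety x₀ r '' s ⊆ {x ∈ s | u x ≤ (1 - r) * u x₀} := by
  rintro _ ⟨y, hy, rfl⟩
  have h1r : 0 ≤ 1 - r := sub_nonneg.mpr hr1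
  rw [AffineMap.homothety_eq_lineMap, AffineMap.lineMap_apply_module]
  refine ⟨hu.1 hx₀ hy h1r hr0 (sub_add_cancel 1 r), ?_⟩
  have := hu.2 hx₀ hy h1r hr0 (sub_add_cancel 1 r)
  simp only [smul_eq_mul] at this
  nlinarith [hu0 y hy]

variable [FiniteDimensional ℝ E] [MeasurableSpace E] [BorelSpace E]
  (μ : Measure E) [μ.IsAddHaarMeasure]

theorem ConvexOn.ofReal_div_mul_measure_le_lintegral_neg (hso : IsOpen s) (hu : ConvexOn ℝ s u)
    (hu0 : ∀ x ∈ s, u x ≤ 0) (hx₀ : x₀ ∈ s) :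
    ENNReal.ofReal (-u x₀ / (Module.finrank ℝ E + 1)) * μ s ≤
      ∫⁻ x in s, ENNReal.ofReal (-u x) ∂μ := by
  rcases (hu0 x₀ hx₀).eq_or_lt with hm | hm
  · simp [hm]
  set m := -u x₀
  replace hm : 0 < m := neg_pos.mpr hm
  have hlevel : ∀ t ∈ Ioo 0 m,
      ENNReal.ofReal ((1 - t / m) ^ Module.finrank ℝ E) * μ s ≤ μ.restrict s {x | t ≤ -u x} := by
    intro t ht
    have hr0 : 0 ≤ 1 - t / m := by rw [sub_nonneg, div_le_one hm]; exact ht.2.le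
    have hsub := hu.image_homothety_subset_of_nonpos hu0 hx₀ hr0 (by linarith [div_pos ht.1 hm])
    calc ENNReal.ofReal ((1 - t / m) ^ Module.finrank ℝ E) * μ s
        = μ (AffineMap.homothety x₀ (1 - t / m) '' s) := by
          rw [Measure.addHaar_image_homothety, abs_of_nonneg (pow_nonneg hr0 _)]
      _ ≤ μ ({x | t ≤ -u x} ∩ s) := measure_mono fun x hx => by
          obtain ⟨hxs, hxu⟩ := hsub hx
          refine ⟨?_, hxs⟩
          rw [sub_sub_cancel, show u x₀ = -m from (neg_neg _).symm, mul_neg,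
            div_mul_cancel₀ _ hm.ne'] at hxu
          exact le_neg_of_le_neg hxu
      _ ≤ μ.restrict s {x | t ≤ -u x} := Measure.le_restrict_apply _ _
  have hnn : 0 ≤ᵐ[μ.restrict s] fun x => -u x :=
    (ae_restrict_iff' hso.measurableSet).mpr (ae_of_all _ fun x hx => neg_nonneg.mpr (hu0 x hx))
  calc ENNReal.ofReal (m / (Module.finrank ℝ E + 1)) * μ s
      = ∫⁻ t in Ioo 0 m, ENNReal.ofReal ((1 - t / m) ^ Module.finrank ℝ E) * μ s := by
        rw [lintegral_mul_const _ (by fun_prop), lintegral_Ioo_one_sub_div_pow hm]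
    _ ≤ ∫⁻ t in Ioo 0 m, μ.restrict s {x | t ≤ -u x} := setLIntegral_mono' measurableSet_Ioo hlevel
    _ ≤ ∫⁻ t in Ioi 0, μ.restrict s {x | t ≤ -u x} := lintegral_mono_set Ioo_subset_Ioi_self
    _ = ∫⁻ x in s, ENNReal.ofReal (-u x) ∂μ := (lintegral_eq_lintegral_meas_le _ hnn
        ((hu.continuousOn hso).aemeasurable hso.measurableSet).neg).symm

theorem ConvexOn.div_mul_measureReal_le_setIntegral_neg (hso : IsOpen s) (hs : μ s ≠ ∞)
    (hu : ConvexOn ℝ s u) (hu0 : ∀ x ∈ s, u x ≤ 0) (hint : IntegrableOn u s μ) (hx₀ : x₀ ∈ s) :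
    -u x₀ / (Module.finrank ℝ E + 1) * μ.real s ≤ ∫ x in s, -u x ∂μ := by
  have hnn : 0 ≤ᵐ[μ.restrict s] fun x => -u x :=
    (ae_restrict_iff' hso.measurableSet).mpr (ae_of_all _ fun x hx => neg_nonneg.mpr (hu0 x hx))
  have hcoef : 0 ≤ -u x₀ / (Module.finrank ℝ E + 1) :=
    div_nonneg (neg_nonneg.mpr (hu0 x₀ hx₀)) (by positivity)
  have h := hu.ofReal_div_mul_measure_le_lintegral_neg μ hso hu0 hx₀
  rw [← ofReal_integral_eq_lintegral_ofReal (f := fun x => -u x) hint.neg hnn,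
    ← ENNReal.ofReal_toReal hs, ← ENNReal.ofReal_mul hcoef,
    ENNReal.ofReal_le_ofReal_iff (integral_nonneg_of_ae hnn)] at h
  exact h

end Cone

theorem setAverage_le_rpow_setAverage_rpow {α : Type*} [MeasurableSpace α] {μ : Measure α}
    {s : Set α} {f : α → ℝ} {p : ℝ} (hp : 1 ≤ p) (hs0 : μ s ≠ 0) (hs : μ s ≠ ∞)
    (hf0 : ∀ᵐ x ∂μ.restrict s, 0 ≤ f x) (hf : IntegrableOn f s μ)
    (hfp : IntegrableOn (fun x => f x ^ p) s μ) :
    ⨍ x in s, f x ∂μ ≤ (⨍ x in s, f x ^ p ∂μ) ^ (1 / p) := by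
  have hp0 : 0 < p := zero_lt_one.trans_le hp
  have hjensen : (⨍ x in s, f x ∂μ) ^ p ≤ ⨍ x in s, f x ^ p ∂μ :=
    (convexOn_rpow hp).map_set_average_le (continuousOn_id.rpow_const fun _ _ => Or.inr hp0.le)
      isClosed_Ici hs0 hs hf0 hf hfp
  have havg : 0 ≤ ⨍ x in s, f x ∂μ := by
    rw [setAverage_eq]
    exact smul_nonneg (inv_nonneg.mpr measureReal_nonneg) (integral_nonneg_of_ae hf0)
  rwa [one_div, Real.le_rpow_inv_iff_of_pos havg ((Real.rpow_nonneg havg p).trans hjensen) hp0]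

section SupNorm

variable {n : ℕ} {Ω : Set (Eucl n)} {u : Eucl n → ℝ}

theorem supN_nonneg : 0 ≤ supN Ω u :=
  Real.iSup_nonneg fun _ => Real.iSup_nonneg fun _ => abs_nonneg _

theorem supN_le {a : ℝ} (ha : 0 ≤ a) (h : ∀ x ∈ Ω, |u x| ≤ a) : supN Ω u ≤ a :=
  Real.iSup_le (fun x => Real.iSup_le (h x) ha) ha

theorem le_supN {C : ℝ} (hC : ∀ y ∈ Ω, |u y| ≤ C) {x : Eucl n} (hx : x ∈ Ω) :
    |u x| ≤ supN Ω u := by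
  have hbdd : BddAbove (range fun y => ⨆ _ : y ∈ Ω, |u y|) :=
    ⟨max C 0, forall_mem_range.mpr fun y =>
      Real.iSup_le (fun hy => (hC y hy).trans (le_max_left _ _)) (le_max_right _ _)⟩
  exact (ciSup_pos hx).symm.le.trans (le_ciSup hbdd x)

variable {p : ℝ}

theorem supN_div_succ_le_rpow_average (hΩo : IsOpen Ω) (hV : volume Ω ≠ ∞)
    (hu : ConvexOn ℝ Ω u) (hu0 : ∀ x ∈ Ω, u x ≤ 0) (hint : IntegrableOn u Ω)
    (hint_p : IntegrableOn (fun x => |u x| ^ p) Ω) (hp : 1 ≤ p) :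
    supN Ω u / ((n : ℝ) + 1) ≤ (((volume Ω).toReal)⁻¹ * ∫ x in Ω, |u x| ^ p) ^ (1 / p) := by
  set A := (((volume Ω).toReal)⁻¹ * ∫ x in Ω, |u x| ^ p) ^ (1 / p)
  rw [div_le_iff₀ (by positivity)]
  refine supN_le (by positivity) fun x₀ hx₀ => ?_
  have hV0 : volume Ω ≠ 0 := (hΩo.measure_pos volume ⟨x₀, hx₀⟩).ne'
  have hcone := hu.div_mul_measureReal_le_setIntegral_neg volume hΩo hV hu0 hint hx₀
  rw [finrank_euclideanSpace_fin, ← abs_of_nonpos (hu0 x₀ hx₀),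
    setIntegral_congr_fun hΩo.measurableSet fun x hx => (abs_of_nonpos (hu0 x hx)).symm] at hcone
  have hjensen : ((volume Ω).toReal)⁻¹ * ∫ x in Ω, |u x| ≤ A := by
    have := setAverage_le_rpow_setAverage_rpow hp hV0 hV
      (ae_of_all _ fun x => abs_nonneg (u x)) hint.abs hint_p
    rwa [setAverage_eq, setAverage_eq, smul_eq_mul, smul_eq_mul] at this
  have hVpos : 0 < (volume Ω).toReal := ENNReal.toReal_pos hV0 hV
  calc |u x₀| = |u x₀| / (n + 1) * (volume Ω).toReal * ((volume Ω).toReal)⁻¹ * (n + 1) := by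
        field_simp
    _ ≤ (∫ x in Ω, |u x|) * ((volume Ω).toReal)⁻¹ * (n + 1) := by gcongr; exact hcone
    _ ≤ A * (n + 1) := by rw [mul_comm _ ((volume Ω).toReal)⁻¹]; gcongr

theorem rpow_average_le_supN (hΩ : MeasurableSet Ω) (hV : volume Ω ≠ ∞) {C : ℝ}
    (hC : ∀ x ∈ Ω, |u x| ≤ C) (hint_p : IntegrableOn (fun x => |u x| ^ p) Ω) (hp : 0 < p) :
    (((volume Ω).toReal)⁻¹ * ∫ x in Ω, |u x| ^ p) ^ (1 / p) ≤ supN Ω u := by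
  have hle : ∀ x ∈ Ω, |u x| ^ p ≤ supN Ω u ^ p := fun x hx =>
    Real.rpow_le_rpow (abs_nonneg _) (le_supN hC hx) hp.le
  have hmean : ((volume Ω).toReal)⁻¹ * ∫ x in Ω, |u x| ^ p ≤ supN Ω u ^ p :=
    calc ((volume Ω).toReal)⁻¹ * ∫ x in Ω, |u x| ^ p
        ≤ ((volume Ω).toReal)⁻¹ * ((volume Ω).toReal * supN Ω u ^ p) := by
          gcongr
          exact (setIntegral_mono_on hint_p (integrableOn_const hV) hΩ hle).trans_eq
            (by rw [setIntegral_const, smul_eq_mul, measureReal_def])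
      _ ≤ supN Ω u ^ p := inv_mul_left_le (Real.rpow_nonneg supN_nonneg p)
  rw [one_div, Real.rpow_inv_le_iff_of_pos (by positivity) supN_nonneg hp]
  exact hmean

end SupNorm

theorem norm_equivalence_general {n : ℕ} (hn : 1 ≤ n)
    (Ω : Set (Eucl n)) (hΩo : IsOpen Ω)
    (hΩb : Bornology.IsBounded Ω)
    (u : Eucl n → ℝ)
    (hu_cont : ContinuousOn u (closure Ω)) (hu_conv : ConvexOn ℝ Ω u)
    (hu_bdry : ∀ x ∈ frontier Ω, u x = 0) :
    ∀ p : ℝ, 1 ≤ p →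
      supN Ω u / ((n : ℝ) + 1) ≤
          (((volume Ω).toReal)⁻¹ * ∫ x in Ω, |u x| ^ p) ^ (1 / p) ∧
        (((volume Ω).toReal)⁻¹ * ∫ x in Ω, |u x| ^ p) ^ (1 / p) ≤ supN Ω u := by
  intro p hp
  have hcomp : IsCompact (closure Ω) := hΩb.isCompact_closure
  have : Nontrivial (Eucl n) :=
    Module.nontrivial_of_finrank_pos (by rw [finrank_euclideanSpace_fin]; omega)
  have hu_nonpos : ∀ x ∈ Ω, u x ≤ 0 := fun x hx => hu_conv.le_of_forall_frontier_le hcomp hu_cont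
    (fun y hy => (hu_bdry y hy).le) x (subset_closure hx)
  have hint : IntegrableOn u Ω := (hu_cont.integrableOn_compact hcomp).mono_set subset_closure
  have hint_p : IntegrableOn (fun x => |u x| ^ p) Ω :=
    ((hu_cont.abs.rpow_const fun _ _ => Or.inr (zero_le_one.trans hp)).integrableOn_compact
      hcomp).mono_set subset_closure
  obtain ⟨C, hC⟩ := hcomp.exists_bound_of_continuousOn hu_cont
  have hV : volume Ω ≠ ∞ := hΩb.measure_lt_top.ne
  exact ⟨supN_div_succ_le_rpow_average hΩo hV hu_conv hu_nonpos hint hint_p hp,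
    rpow_average_le_supN hΩo.measurableSet hV (fun x hx => hC x (subset_closure hx)) hint_p
      (zero_lt_one.trans_le hp)⟩

/-- Lemma 2.9: equivalence of `L^p` norms for convex functions vanishing
on the boundary. -/
theorem norm_equivalence {n : ℕ} (hn : 1 ≤ n)
    (Ω : Set (Eucl n)) (hΩo : IsOpen Ω) (hΩc : Convex ℝ Ω)
    (hΩb : Bornology.IsBounded Ω) (hΩne : Ω.Nonempty)
    (u : Eucl n → ℝ)
    (hu_cont : ContinuousOn u (closure Ω)) (hu_conv : ConvexOn ℝ Ω u)
    (hu_bdry : ∀ x ∈ frontier Ω, u x = 0) :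
    ∀ p : ℝ, 1 ≤ p →
      supN Ω u / ((n : ℝ) + 1) ≤
          (((volume Ω).toReal)⁻¹ * ∫ x in Ω, |u x| ^ p) ^ (1 / p) ∧
        (((volume Ω).toReal)⁻¹ * ∫ x in Ω, |u x| ^ p) ^ (1 / p) ≤ supN Ω u :=
  norm_equivalence_general hn Ω hΩo hΩb u hu_cont hu_conv hu_bdry
end
end
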